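/- arXiv:1602.06614 — 3 statements merged into one kernel-verified Lean document; each statement's English description precedes it below -/
import Mathlib

section
/- Let A be a commutative group and β : A × A → M a bimultiplicative map into a commutative group M with β(x,y)β(y,x) = 1 for all x,y. Fix integers r ≥ 1 and c, and define σ on T = A^r by σ(t,t') = ∏_{1≤i<j≤r} β(t_i, t'_j) · ∏_{1≤i,j≤r} β(t_i, t'_j)^c. Then for every t ∈ T and a ∈ A, writing aI = (a,…,a), we have σ(t, aI)·σ(aI, t)^{-1} = β(t₁t₂⋯t_r, a)^{r-1+2cr}. -/
open Finset

/-!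
Write `f k = β(t_k, a)`. Antisymmetry turns `β(a, t_j)` into `f_j⁻¹`, so in
`σ(t, aI) σ(aI, t)⁻¹` the two strictly triangular products combine to
`∏_{i<j} f_i f_j = (∏ f)^{r-1}` (every index lies in exactly `r - 1` pairs), while the two
full products each contribute `(∏ f)^{cr}`. Linearity in the first variable identifies
`∏ f` with `β(t₁⋯t_r, a)`.
-/

theorem Fin.card_Ioi_add_card_Iio {r : ℕ} (k : Fin r) : #(Ioi k) + #(Iio k) = r - 1 := by
  rw [Fin.card_Ioi, Fin.card_Iio]
  omega

theorem Fin.prod_prod_lt_mul_prod_prod_lt {M : Type*} [CommGroup M] {r : ℕ} (f : Fin r → M) :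
    (∏ i : Fin r, ∏ _j ∈ univ.filter (fun j => i < j), f i) *
        ∏ i : Fin r, ∏ j ∈ univ.filter (fun j => i < j), f j =
      (∏ i, f i) ^ ((r : ℤ) - 1) := by
  have swap : ∏ i : Fin r, ∏ j ∈ univ.filter (fun j => i < j), f j =
      ∏ j : Fin r, ∏ i ∈ univ.filter (fun i => i < j), f j :=
    prod_comm' fun i j => by simp
  rw [swap, ← prod_zpow, ← prod_mul_distrib]
  refine prod_congr rfl fun k _ => ?_
  have hr : 1 ≤ r := Nat.one_le_of_lt k.isLt
  simp only [filter_lt_eq_Ioi, filter_gt_eq_Iio]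
  rw [Finset.prod_const, Finset.prod_const, ← pow_add, Fin.card_Ioi_add_card_Iio,
    ← zpow_natCast, Nat.cast_sub hr, Nat.cast_one]

theorem stmt4_general {A M : Type*} [CommGroup A] [CommGroup M] (β : A → A → M)
    (h1 : ∀ x y z : A, β (x * y) z = β x z * β y z)
    (hanti : ∀ x y : A, β x y * β y x = 1)
    (r : ℕ) (c : ℤ)
    (σ : (Fin r → A) → (Fin r → A) → M)
    (hσ : ∀ t t' : Fin r → A, σ t t' =
      (∏ i : Fin r, ∏ j ∈ univ.filter (fun j => i < j), β (t i) (t' j)) *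
        (∏ i : Fin r, ∏ j : Fin r, β (t i) (t' j)) ^ c)
    (t : Fin r → A) (a : A) :
    σ t (fun _ => a) * (σ (fun _ => a) t)⁻¹ =
      β (∏ i : Fin r, t i) a ^ ((r : ℤ) - 1 + 2 * c * r) := by
  set f : Fin r → M := fun k => β (t k) a
  have hinv : ∀ x, β a x = (β x a)⁻¹ := fun x => eq_inv_of_mul_eq_one_left (hanti a x)
  have hprod : β (∏ i, t i) a = ∏ i, f i :=
    map_prod (MonoidHom.mk' (β · a) (h1 · · a)) t univ
  have hleft : σ t (fun _ => a) =
      (∏ i : Fin r, ∏ _j ∈ univ.filter (fun j => i < j), f i) * (∏ i, f i) ^ ((r : ℤ) * c) := by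
    rw [hσ, zpow_mul, zpow_natCast, ← prod_pow]
    simp only [prod_const, card_univ, Fintype.card_fin, f]
  have hright : σ (fun _ => a) t =
      ((∏ i : Fin r, ∏ j ∈ univ.filter (fun j => i < j), f j) * (∏ i, f i) ^ ((r : ℤ) * c))⁻¹ := by
    rw [hσ, zpow_mul, zpow_natCast, ← prod_pow, mul_inv, ← inv_zpow, ← prod_inv_distrib]
    simp only [hinv, prod_inv_distrib, prod_const, prod_pow, card_univ, Fintype.card_fin, f]
  rw [hleft, hright, inv_inv, mul_mul_mul_comm, Fin.prod_prod_lt_mul_prod_prod_lt, ← zpow_add,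
    ← zpow_add, hprod]
  congr 1
  ring

/-- Torus case of Takeda's Lemma 3.13: for the Kazhdan–Patterson torus cocycle
`σ(t,t') = ∏_{i<j} β(tᵢ,t'ⱼ) · ∏_{i,j} β(tᵢ,t'ⱼ)^c` built from an antisymmetric
bimultiplicative pairing `β`, one has `σ(t, aI)·σ(aI, t)⁻¹ = β(t₁⋯t_r, a)^{r-1+2cr}`. -/
theorem stmt4 {A M : Type*} [CommGroup A] [CommGroup M] (β : A → A → M)
    (h1 : ∀ x y z : A, β (x * y) z = β x z * β y z)
    (h2 : ∀ x y z : A, β x (y * z) = β x y * β x z)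
    (hanti : ∀ x y : A, β x y * β y x = 1)
    (r : ℕ) (hr : 1 ≤ r) (c : ℤ)
    (σ : (Fin r → A) → (Fin r → A) → M)
    (hσ : ∀ t t' : Fin r → A, σ t t' =
      (∏ i : Fin r, ∏ j ∈ univ.filter (fun j => i < j), β (t i) (t' j)) *
        (∏ i : Fin r, ∏ j : Fin r, β (t i) (t' j)) ^ c)
    (t : Fin r → A) (a : A) :
    σ t (fun _ => a) * (σ (fun _ => a) t)⁻¹ =
      β (∏ i : Fin r, t i) a ^ ((r : ℤ) - 1 + 2 * c * r) :=
  stmt4_general β h1 hanti r c σ hσ t a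
end

section
/- Let A be a commutative group, n ≥ 1, and β : A × A → μ a bimultiplicative map into a cyclic group μ of order n with β(x,y)β(y,x) = 1 for all x,y. Fix r ≥ 1 and an integer c, and let σ on T = A^r be σ(t,t') = ∏_{i<j} β(t_i,t'_j)·∏_{i,j} β(t_i,t'_j)^c. Form the group T̃ = T × μ with multiplication (t,ζ)(t',ζ') = (tt', ζζ'σ(t,t')). Assume β is nondegenerate modulo n-th powers, i.e., for x ∈ A, β(x,y) = 1 for all y ∈ A if and only if x ∈ Aⁿ. Then (t,ζ) lies in the center of T̃ if and only if there exists z ∈ A with z^{2rc+r-1} ∈ Aⁿ and t_i ∈ z·Aⁿ for every i = 1,…,r. -/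
/-
Centrality of `(t, ζ)` amounts to `σ t t' = σ t' t` for all `t'`. By antisymmetry of `β`, the
strictly upper part of `σ t' t` inverts the strictly lower part of the matrix `β (tᵢ) (t'ⱼ)`, so
together with the upper part of `σ t t'` it fills everything but the diagonal. With `P = ∏ tᵢ`
this gives `σ t t' / σ t' t = ∏ⱼ β (tⱼ⁻¹ P^(2c+1)) (t'ⱼ)`, so `(t, ζ)` is central iff every
`tⱼ⁻¹ P^(2c+1)` lies in the kernel of `β`, which is `Aⁿ`. Modulo `Aⁿ` this says that all `tⱼ`
equal `z = P^(2c+1)`; then `P = z^r` forces `z^(r(2c+1)-1) = 1`, and conversely such a `z`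
satisfies `P^(2c+1) = z^(r(2c+1)) = z`.
-/

open Finset

theorem forall_twisted_mul_comm_iff {T μ : Type*} [CommMonoid T] [CancelCommMonoid μ]
    (σ : T → T → μ) (t : T) (ζ : μ) :
    (∀ (t' : T) (ζ' : μ), ((t * t', ζ * ζ' * σ t t') : T × μ) = (t' * t, ζ' * ζ * σ t' t)) ↔
      ∀ t', σ t t' = σ t' t := by
  simp only [Prod.mk.injEq, mul_comm t, mul_comm _ ζ, mul_assoc, mul_right_inj, true_and,
    forall_const]

theorem Finset.prod_filter_lt_mul_prod_filter_lt_swap_mul_prod_diag {ι M : Type*} [Fintype ι]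
    [LinearOrder ι] [CommMonoid M] (f : ι → ι → M) :
    (∏ i, ∏ j ∈ univ.filter (fun j => i < j), f i j) *
        (∏ i, ∏ j ∈ univ.filter (fun j => i < j), f j i) * ∏ i, f i i = ∏ i, ∏ j, f i j := by
  rw [prod_comm' (f := fun i j => f j i) (s' := fun j => univ.filter (fun i => i < j))
      (t' := univ) (by simp), ← prod_mul_distrib, ← prod_mul_distrib]
  refine prod_congr rfl fun i _ => ?_
  rw [prod_filter, prod_filter, ← Fintype.prod_ite_eq' i (f i),
    ← prod_mul_distrib, ← prod_mul_distrib]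
  refine prod_congr rfl fun j _ => ?_
  rcases lt_trichotomy i j with h | rfl | h
  · simp [h, h.ne', not_lt_of_gt h]
  · simp
  · simp [h, h.ne, not_lt_of_gt h]

theorem MonoidHom.forall_prod_apply_eq_one_iff {ι A μ : Type*} [Fintype ι] [DecidableEq ι]
    [CommMonoid A] [CommMonoid μ] (φ : ι → A →* μ) :
    (∀ a : ι → A, ∏ j, φ j (a j) = 1) ↔ ∀ j, φ j = 1 := by
  refine ⟨fun h j => MonoidHom.ext fun x => ?_, fun h a => by simp [h]⟩
  rw [MonoidHom.one_apply, ← h (Pi.mulSingle j x),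
    Fintype.prod_eq_single j fun i hi => by simp [hi], Pi.mulSingle_eq_same]

theorem forall_eq_prod_zpow_iff {ι G : Type*} [Fintype ι] [CommGroup G] (s : ι → G) (m : ℤ) :
    (∀ j, s j = (∏ i, s i) ^ m) ↔ ∃ z : G, z ^ (Fintype.card ι * m - 1) = 1 ∧ ∀ j, s j = z := by
  have prod_of_const {z : G} (h : ∀ j, s j = z) : ∏ i, s i = z ^ (Fintype.card ι : ℤ) := by
    rw [Fintype.prod_congr _ _ h, prod_const, card_univ, zpow_natCast]
  constructor
  · intro h
    refine ⟨_, ?_, h⟩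
    rw [zpow_sub_one, mul_inv_eq_one, zpow_mul, ← prod_of_const h]
  · rintro ⟨z, hz, h⟩ j
    rw [h, prod_of_const h, ← zpow_mul, eq_comm, ← mul_inv_eq_one, ← zpow_sub_one, hz]

theorem forall_inv_mul_prod_zpow_mem_iff {ι A : Type*} [Fintype ι] [CommGroup A]
    (H : Subgroup A) (t : ι → A) (m : ℤ) :
    (∀ j, (t j)⁻¹ * (∏ i, t i) ^ m ∈ H) ↔
      ∃ z : A, z ^ (Fintype.card ι * m - 1) ∈ H ∧ ∀ j, z⁻¹ * t j ∈ H := by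
  have key := forall_eq_prod_zpow_iff (fun j => (t j : A ⧸ H)) m
  simp only [← QuotientGroup.mk_prod, ← QuotientGroup.mk_zpow, QuotientGroup.eq] at key
  rw [key, QuotientGroup.mk_surjective.exists]
  simp only [← QuotientGroup.mk_zpow, QuotientGroup.eq_one_iff, @eq_comm (A ⧸ H) (t _),
    QuotientGroup.eq]

section TorusCocycle

variable {ι A μ : Type*} [Fintype ι] [LinearOrder ι] [CommGroup A] [CommGroup μ]

def torusCocycle (B : A →* A →* μ) (c : ℤ) (t t' : ι → A) : μ :=
  (∏ i, ∏ j ∈ univ.filter (fun j => i < j), B (t i) (t' j)) * (∏ i, ∏ j, B (t i) (t' j)) ^ c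

variable {B : A →* A →* μ}

theorem torusCocycle_mul_inv_swap (hB : ∀ x y, B x y * B y x = 1) (c : ℤ) (t t' : ι → A) :
    torusCocycle B c t t' * (torusCocycle B c t' t)⁻¹ =
      ∏ j, B ((t j)⁻¹ * (∏ i, t i) ^ (2 * c + 1)) (t' j) := by
  set U := ∏ i, ∏ j ∈ univ.filter (fun j => i < j), B (t i) (t' j)
  set U' := ∏ i, ∏ j ∈ univ.filter (fun j => i < j), B (t j) (t' i)
  set W := ∏ i, ∏ j, B (t i) (t' j)
  set D := ∏ i, B (t i) (t' i)
  have cocycle_swap : torusCocycle B c t' t = U'⁻¹ * (W ^ c)⁻¹ := by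
    have hB' (i j : ι) : B (t' i) (t j) = (B (t j) (t' i))⁻¹ := eq_inv_of_mul_eq_one_left (hB _ _)
    simp only [torusCocycle, hB', prod_inv_distrib, inv_zpow, U', W]
    rw [prod_comm]
  have hUU' : U * U' = W * D⁻¹ :=
    eq_mul_inv_of_mul_eq (prod_filter_lt_mul_prod_filter_lt_swap_mul_prod_diag _)
  have hW : W = B (∏ i, t i) (∏ j, t' j) := by
    simp only [W, map_prod, MonoidHom.finsetProd_apply]
    exact prod_comm
  calc torusCocycle B c t t' * (torusCocycle B c t' t)⁻¹ = U * U' * (W ^ c * W ^ c) := by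
        change U * W ^ c * _ = _
        rw [cocycle_swap, mul_inv_rev, inv_inv, inv_inv]; ac_rfl
    _ = D⁻¹ * W ^ (2 * c + 1) := by
        rw [hUU', zpow_add_one, two_mul, zpow_add]; ac_rfl
    _ = ∏ j, B ((t j)⁻¹ * (∏ i, t i) ^ (2 * c + 1)) (t' j) := by
        rw [hW, ← MonoidHom.zpow_apply, ← map_zpow, map_prod (B _)]
        simp only [D, map_mul, map_inv, MonoidHom.mul_apply, MonoidHom.inv_apply,
          prod_mul_distrib, prod_inv_distrib]

theorem forall_torusCocycle_eq_swap_iff (hB : ∀ x y, B x y * B y x = 1) (c : ℤ) (t : ι → A) :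
    (∀ t', torusCocycle B c t t' = torusCocycle B c t' t) ↔
      ∀ j, (t j)⁻¹ * (∏ i, t i) ^ (2 * c + 1) ∈ B.ker := by
  simp only [← mul_inv_eq_one (a := torusCocycle B c t _), torusCocycle_mul_inv_swap hB,
    MonoidHom.mem_ker]
  exact MonoidHom.forall_prod_apply_eq_one_iff _

end TorusCocycle

theorem stmt5_general {A μ : Type*} [CommGroup A] [CommGroup μ]
    (n : ℕ)
    (β : A → A → μ)
    (h1 : ∀ x y z : A, β (x * y) z = β x z * β y z)
    (h2 : ∀ x y z : A, β x (y * z) = β x y * β x z)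
    (hanti : ∀ x y : A, β x y * β y x = 1)
    (r : ℕ) (c : ℤ)
    (σ : (Fin r → A) → (Fin r → A) → μ)
    (hσ : ∀ t t' : Fin r → A, σ t t' =
      (∏ i : Fin r, ∏ j ∈ univ.filter (fun j => i < j), β (t i) (t' j)) *
        (∏ i : Fin r, ∏ j : Fin r, β (t i) (t' j)) ^ c)
    (hnondeg : ∀ x : A, (∀ y : A, β x y = 1) ↔ ∃ u : A, u ^ n = x)
    (t : Fin r → A) (ζ : μ) :
    (∀ (t' : Fin r → A) (ζ' : μ),
        (t * t', ζ * ζ' * σ t t') = ((t' * t, ζ' * ζ * σ t' t) : (Fin r → A) × μ)) ↔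
      ∃ z : A, (∃ w : A, w ^ n = z ^ (2 * (r : ℤ) * c + (r : ℤ) - 1)) ∧
        ∀ i : Fin r, ∃ u : A, t i = z * u ^ n := by
  let B : A →* A →* μ :=
    MonoidHom.mk' (fun x => MonoidHom.mk' (β x) (h2 x)) fun x y => MonoidHom.ext (h1 x y)
  have hσB : σ = torusCocycle B c := funext₂ hσ
  have hker : B.ker = (powMonoidHom n).range := by
    ext x
    exact DFunLike.ext_iff.trans (hnondeg x)
  have hexp : (Fintype.card (Fin r) : ℤ) * (2 * c + 1) - 1 = 2 * r * c + r - 1 := by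
    rw [Fintype.card_fin]; ring
  rw [forall_twisted_mul_comm_iff, hσB, forall_torusCocycle_eq_swap_iff hanti, hker,
    forall_inv_mul_prod_zpow_mem_iff, hexp]
  simp only [MonoidHom.mem_range, powMonoidHom_apply, eq_inv_mul_iff_mul_eq, @eq_comm _ (t _)]

/-- Kazhdan–Patterson description of the center of the metaplectic torus cover:
with `T̃ = A^r × μ` and multiplication `(t,ζ)(t',ζ') = (tt', ζζ'σ(t,t'))`, and `β`
nondegenerate modulo `n`-th powers, the element `(t,ζ)` is central if and only if
there is `z ∈ A` with `z^{2rc+r-1} ∈ Aⁿ` and `tᵢ ∈ z·Aⁿ` for all `i`. -/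
theorem stmt5 {A μ : Type*} [CommGroup A] [CommGroup μ] [Fintype μ]
    (n : ℕ) (hn : 1 ≤ n) (hcard : Fintype.card μ = n) (hcyc : IsCyclic μ)
    (β : A → A → μ)
    (h1 : ∀ x y z : A, β (x * y) z = β x z * β y z)
    (h2 : ∀ x y z : A, β x (y * z) = β x y * β x z)
    (hanti : ∀ x y : A, β x y * β y x = 1)
    (r : ℕ) (hr : 1 ≤ r) (c : ℤ)
    (σ : (Fin r → A) → (Fin r → A) → μ)
    (hσ : ∀ t t' : Fin r → A, σ t t' =
      (∏ i : Fin r, ∏ j ∈ univ.filter (fun j => i < j), β (t i) (t' j)) *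
        (∏ i : Fin r, ∏ j : Fin r, β (t i) (t' j)) ^ c)
    (hnondeg : ∀ x : A, (∀ y : A, β x y = 1) ↔ ∃ u : A, u ^ n = x)
    (t : Fin r → A) (ζ : μ) :
    (∀ (t' : Fin r → A) (ζ' : μ),
        (t * t', ζ * ζ' * σ t t') = ((t' * t, ζ' * ζ * σ t' t) : (Fin r → A) × μ)) ↔
      ∃ z : A, (∃ w : A, w ^ n = z ^ (2 * (r : ℤ) * c + (r : ℤ) - 1)) ∧
        ∀ i : Fin r, ∃ u : A, t i = z * u ^ n :=
  stmt5_general n β h1 h2 hanti r c σ hσ hnondeg t ζ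
end

section
/- Let r₁,…,r_k be positive integers with r₁ + ⋯ + r_k = r, set R₀ = 0 and R_j = r₁ + ⋯ + r_j, and let S = {R₁, R₂, …, R_{k-1}}. Let σ be a permutation of {1,…,r} such that: (i) σ is strictly increasing on each block B_j = {R_{j-1}+1, …, R_j}; (ii) for every i ∈ {1,…,r-1} with i ∉ S, one has σ(i+1) = σ(i) + 1; and (iii) for every i ∈ S, one has σ(i) > σ(i+1). Then σ is uniquely determined: for i ∈ B_j, σ(i) = (r_{j+1} + r_{j+2} + ⋯ + r_k) + (i - R_{j-1}). In other words, σ maps the j-th block onto the consecutive interval occupied by the j-th block counted from the end, i.e., σ is the inverse of the block-reversing permutation w^{M_λ}. -/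
/-!
On each block the condition `σ (i + 1) = σ i + 1` makes `σ` a translation, so block `j` is
mapped onto an interval `[a_j, a_j + r_j)`. The descent at the boundary between blocks `j` and
`j + 1`, together with injectivity, forces the interval of block `j + 1` to lie entirely below
that of block `j`; hence `b_j := a_j + R_{j+1}` is antitone in `j`. Since `b_0 ≤ r` (the first
block is mapped into `[0, r)`) and `b_{k-1} ≥ R_k = r`, every `b_j` equals `r`.
-/

open Finset

theorem apply_eq_apply_add_sub_of_apply_succ {σ : ℕ → ℕ} {a b : ℕ}
    (h : ∀ i, a ≤ i → i + 1 < b → σ (i + 1) = σ i + 1) {i : ℕ} (hai : a ≤ i)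
    (hib : i < b) : σ i = σ a + (i - a) := by
  induction i, hai using Nat.le_induction with
  | base => simp
  | succ i hai ih => rw [h i hai hib, ih (by omega)]; omega

theorem image_Ico_eq_Ico_of_apply_eq_apply_add_sub {σ : ℕ → ℕ} {a b : ℕ}
    (h : ∀ i, a ≤ i → i < b → σ i = σ a + (i - a)) :
    σ '' Set.Ico a b = Set.Ico (σ a) (σ a + (b - a)) := by
  ext y
  constructor
  · rintro ⟨i, ⟨hai, hib⟩, rfl⟩
    rw [h i hai hib]
    constructor <;> omega
  · rintro ⟨hay, hyb⟩
    refine ⟨a + (y - σ a), ⟨by omega, by omega⟩, ?_⟩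
    rw [h _ (by omega) (by omega)]
    omega

theorem apply_add_sub_le_of_apply_lt_apply_pred {σ : ℕ → ℕ} {s : Set ℕ} {a b c : ℕ}
    (hσ : Set.InjOn σ s) (hs : Set.Ico a c ⊆ s) (hab : a < b) (hbc : b < c)
    (hshift₁ : ∀ i, a ≤ i → i < b → σ i = σ a + (i - a))
    (hshift₂ : ∀ i, b ≤ i → i < c → σ i = σ b + (i - b))
    (hdesc : σ b < σ (b - 1)) :
    σ b + (c - b) ≤ σ a := by
  have hdisj : Disjoint (σ '' Set.Ico a b) (σ '' Set.Ico b c) :=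
    Set.Ico_disjoint_Ico_same.image hσ ((Set.Ico_subset_Ico_right hbc.le).trans hs)
      ((Set.Ico_subset_Ico_left hab.le).trans hs)
  rw [image_Ico_eq_Ico_of_apply_eq_apply_add_sub hshift₁,
    image_Ico_eq_Ico_of_apply_eq_apply_add_sub hshift₂, Set.Ico_disjoint_Ico] at hdisj
  have := hshift₁ (b - 1) (by omega) (by omega)
  omega

theorem apply_eq_apply_add_sub_of_mem_block {k r : ℕ} {R σ : ℕ → ℕ} (hR : Monotone R)
    (hrk : R k = r)
    (hstep : ∀ i, i + 1 < r → (∀ j, 0 < j → j < k → i + 1 ≠ R j) →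
      σ (i + 1) = σ i + 1)
    {j : ℕ} (hj : j < k) {i : ℕ} (hi₁ : R j ≤ i) (hi₂ : i < R (j + 1)) :
    σ i = σ (R j) + (i - R j) :=
  apply_eq_apply_add_sub_of_apply_succ
    (fun i hi₁ hi₂ ↦ hstep i (hi₂.trans_le (hrk ▸ hR (by omega)))
      fun l _ _ ↦ (hR.ne_of_lt_of_lt_nat j (by omega) hi₂ l).symm)
    hi₁ hi₂

theorem stmt8_general (k r : ℕ) (rr : ℕ → ℕ) (R : ℕ → ℕ)
    (hR : ∀ j, R j = ∑ l ∈ range j, rr l)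
    (hpos : ∀ j, j < k → 0 < rr j)
    (hrk : R k = r)
    (σ : ℕ → ℕ)
    (hbij : Set.BijOn σ {i | i < r} {i | i < r})
    (hstep : ∀ i, i + 1 < r → (∀ j, 0 < j → j < k → i + 1 ≠ R j) → σ (i + 1) = σ i + 1)
    (hdesc : ∀ j, 0 < j → j < k → σ (R j) < σ (R j - 1)) :
    ∀ j, j < k → ∀ i, R j ≤ i → i < R (j + 1) → σ i = (r - R (j + 1)) + (i - R j) := by
  have hsucc (j : ℕ) : R (j + 1) = R j + rr j := by rw [hR, hR, sum_range_succ]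
  have hmono : Monotone R :=
    monotone_nat_of_le_succ fun j ↦ (hsucc j).symm ▸ Nat.le_add_right _ _
  have hle (j : ℕ) (hj : j ≤ k) : R j ≤ r := hrk ▸ hmono hj
  have hblock (j : ℕ) (hj : j < k) (i : ℕ) :
      R j ≤ i → i < R (j + 1) → σ i = σ (R j) + (i - R j) :=
    apply_eq_apply_add_sub_of_mem_block hmono hrk hstep hj
  have hlt (j : ℕ) (hj : j < k) : R j < R (j + 1) := by have := hpos j hj; have := hsucc j; omega
  have hanti : AntitoneOn (fun j ↦ σ (R j) + R (j + 1)) (Set.Iio k) :=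
    antitoneOn_of_add_one_le Set.ordConnected_Iio fun j _ _ (hj : j + 1 < k) ↦ by
      have := apply_add_sub_le_of_apply_lt_apply_pred hbij.injOn
        (fun i (hi : i ∈ Set.Ico _ _) ↦ hi.2.trans_le (hle (j + 1 + 1) hj)) (hlt j (by omega))
        (hlt (j + 1) hj) (hblock j (by omega)) (hblock (j + 1) hj)
        (hdesc (j + 1) j.succ_pos hj)
      have := hle (j + 1) (by omega)
      omega
  intro j hj i hi₁ hi₂
  have hfirst : σ (R 0) + R 1 ≤ r := by
    have hR0 : R 0 = 0 := by simp [hR]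
    have hR1 : R 0 < R 1 := hlt 0 (by omega)
    have hlast : σ (R 1 - 1) < r :=
      hbij.mapsTo (show R 1 - 1 < r by have := hle 1 (by omega); omega)
    rw [hblock 0 (by omega) _ (by omega) (show R 1 - 1 < R 1 by omega)] at hlast
    omega
  have hupper := (hanti (Set.mem_Iio.2 (by omega : 0 < k)) hj (Nat.zero_le j)).trans hfirst
  have hlower := hanti hj (Set.mem_Iio.2 (by omega : k - 1 < k)) (by omega : j ≤ k - 1)
  simp only [show k - 1 + 1 = k by omega, hrk] at hupper hlower
  rw [hblock j hj i hi₁ hi₂]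
  omega

/-- Combinatorial core of the constant-term computation: a permutation `σ` of
`{0,…,r-1}` (0-based) which is strictly increasing on each block of the composition
`(r₁,…,r_k)`, satisfies `σ(i+1) = σ(i)+1` at every non-boundary index, and has a
descent at every block boundary, must be the inverse of the block-reversing
permutation `w^{M_λ}`: it maps the `j`-th block onto the interval occupied by the
`j`-th block counted from the end. -/
theorem stmt8 (k r : ℕ) (rr : ℕ → ℕ) (R : ℕ → ℕ)
    (hR : ∀ j, R j = ∑ l ∈ range j, rr l)
    (hpos : ∀ j, j < k → 0 < rr j)
    (hrk : R k = r)
    (σ : ℕ → ℕ)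
    (hbij : Set.BijOn σ {i | i < r} {i | i < r})
    (hinc : ∀ j, j < k → ∀ i₁ i₂, R j ≤ i₁ → i₁ < i₂ → i₂ < R (j + 1) → σ i₁ < σ i₂)
    (hstep : ∀ i, i + 1 < r → (∀ j, 0 < j → j < k → i + 1 ≠ R j) → σ (i + 1) = σ i + 1)
    (hdesc : ∀ j, 0 < j → j < k → σ (R j) < σ (R j - 1)) :
    ∀ j, j < k → ∀ i, R j ≤ i → i < R (j + 1) → σ i = (r - R (j + 1)) + (i - R j) :=
  stmt8_general k r rr R hR hpos hrk σ hbij hstep hdesc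
end
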